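/- Let G be in class B with diam(G) ≥ 4, let B0 be a leaf block of G with unique cut-vertex v, and let u be a non-cut-vertex of G in B0. If u and v lie in the same partite set of B0 then e(u) = e(v) + 2; otherwise e(u) = e(v) + 1. -/

import Mathlib

open SimpleGraph

variable {V : Type*}

/-- `v` is a cut-vertex of the graph `G`: deleting `v` disconnects `G`. -/
def CutVtx (G : SimpleGraph V) (v : V) : Prop :=
  ¬ (G.induce {v}ᶜ).Connected

/-- A nonseparable graph: connected and with no cut-vertex. -/
def NoCutVtx {W : Type*} (H : SimpleGraph W) : Prop :=
  H.Connected ∧ ∀ w : W, (H.induce {w}ᶜ).Connected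

/-- `B` is (the vertex set of) a block of `G`: a maximal nonseparable
induced subgraph. -/
def IsBlockSet (G : SimpleGraph V) (B : Set V) : Prop :=
  NoCutVtx (G.induce B) ∧ ∀ C : Set V, B ⊆ C → NoCutVtx (G.induce C) → B = C

/-- The set of cut-vertices of `G`. -/
def cutSet (G : SimpleGraph V) : Set V := {v | CutVtx G v}

/-- The set `B` induces a complete bipartite graph in `G` with
bipartition `(V1, V2)`. -/
def CompBipOn (G : SimpleGraph V) (B V1 V2 : Set V) : Prop :=
  V1.Nonempty ∧ V2.Nonempty ∧ Disjoint V1 V2 ∧ V1 ∪ V2 = B ∧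
    ∀ x ∈ B, ∀ y ∈ B, (G.Adj x y ↔ (x ∈ V1 ∧ y ∈ V2) ∨ (x ∈ V2 ∧ y ∈ V1))

/-- A bi-block graph: a connected graph all of whose blocks are
complete bipartite. -/
def BiBlockGraph (G : SimpleGraph V) : Prop :=
  G.Connected ∧ ∀ B : Set V, IsBlockSet G B → ∃ V1 V2 : Set V, CompBipOn G B V1 V2

/-- The class 𝓑: bi-block graphs with at least two blocks and at most two
cut-vertices in each block. -/
def ClassB (G : SimpleGraph V) : Prop :=
  BiBlockGraph G ∧
  (∃ B1 B2 : Set V, IsBlockSet G B1 ∧ IsBlockSet G B2 ∧ B1 ≠ B2) ∧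
  ∀ B : Set V, IsBlockSet G B → (B ∩ cutSet G).ncard ≤ 2

/-- `S` is an admissible vertex set for the associated tree `T_G`:
it contains all cut-vertices of `G`, both vertices of every `K_{1,1}` block,
exactly one non-cut-vertex from each partite set of every leaf block,
exactly one non-cut-vertex from the cut-vertex-free partite set of every
bridge block whose two cut-vertices share a partite set, and no other
vertices. -/
def AssocSet (G : SimpleGraph V) (S : Set V) : Prop :=
  (∀ v, CutVtx G v → v ∈ S) ∧
  ∀ B V1 V2 : Set V, IsBlockSet G B → CompBipOn G B V1 V2 →
    ((V1.ncard = 1 ∧ V2.ncard = 1) → B ⊆ S) ∧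
    (¬ (V1.ncard = 1 ∧ V2.ncard = 1) →
      (((B ∩ cutSet G).ncard = 1) →
          (S ∩ (V1 \ cutSet G)).ncard = 1 ∧ (S ∩ (V2 \ cutSet G)).ncard = 1) ∧
      (((B ∩ cutSet G).ncard = 2) →
          (((V1 ∩ cutSet G).ncard = 2) →
              (S ∩ (V2 \ cutSet G)).ncard = 1 ∧ S ∩ (V1 \ cutSet G) = ∅) ∧
          (((V2 ∩ cutSet G).ncard = 2) →
              (S ∩ (V1 \ cutSet G)).ncard = 1 ∧ S ∩ (V2 \ cutSet G) = ∅) ∧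
          (((V1 ∩ cutSet G).ncard = 1 ∧ (V2 ∩ cutSet G).ncard = 1) →
              S ∩ (B \ cutSet G) = ∅)))

/-- The eccentricity of a vertex. -/
noncomputable def ecc (G : SimpleGraph V) (v : V) : ℕ := sSup (Set.range (G.dist v))

/-- The diameter of a graph. -/
noncomputable def gdiam (G : SimpleGraph V) : ℕ := sSup (Set.range (ecc G))

/-- The radius of a graph. -/
noncomputable def gradius (G : SimpleGraph V) : ℕ := sInf (Set.range (ecc G))

/-- The center of a graph: vertices of minimum eccentricity. -/
noncomputable def gcenter (G : SimpleGraph V) : Set V := {v | ecc G v = gradius G}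

/-- The eccentricity matrix of `G`. -/
noncomputable def eccMatrix (G : SimpleGraph V) : Matrix V V ℝ := fun u v =>
  if G.dist u v = min (ecc G u) (ecc G v) then (G.dist u v : ℝ) else 0

/-- The spectrum of the eccentricity matrix of `G` is symmetric with respect
to the origin: `μ` is an eigenvalue with multiplicity `l` iff `-μ` is. -/
def SpectrumSymm [Fintype V] [DecidableEq V] (G : SimpleGraph V) : Prop :=
  ∀ (hH : (eccMatrix G).IsHermitian) (μ : ℝ),
    {i | hH.eigenvalues i = μ}.ncard = {i | hH.eigenvalues i = -μ}.ncard

/-- A vertex is diametrically distinguished if it lies on some diametrical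
path and is adjacent to some central vertex. -/
noncomputable def DiamDistinguished (G : SimpleGraph V) (u : V) : Prop :=
  (∃ (a b : V) (p : G.Walk a b), p.IsPath ∧ p.length = G.dist a b ∧
      G.dist a b = gdiam G ∧ u ∈ p.support) ∧
  ∃ z ∈ gcenter G, G.Adj u z

/-!
A block `B0` is closed under adjacency at its non-cut-vertices: an edge `x y` leaving `B0` at a
non-cut-vertex `x`, followed by a path from `y` back to `B0` in `G - x`, is an ear whose union with
`B0` is still nonseparable, contradicting maximality. Hence in a leaf block every path from `u`
out of `B0` passes through `v`, so `d(u, w) = d(u, v) + d(v, w)` for `w ∉ B0`. A complete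
bipartite block has diameter at most `2`, while `diam G ≥ 4` forces the eccentricity of `v` to be
attained outside `B0`; therefore `e(u) = d(u, v) + e(v)`, and `d(u, v)` is `2` or `1` according
as `u` and `v` lie in the same partite set or not.
-/

namespace SimpleGraph

variable {G : SimpleGraph V}

lemma Walk.IsPath.exists_walk_to_endpoint_avoiding {u v z w : V} {p : G.Walk u v}
    (hp : p.IsPath) (hz : z ∈ p.support) (hwz : w ≠ z) :
    ∃ e, (e = u ∨ e = v) ∧ ∃ q : G.Walk z e, ∀ x ∈ q.support, x ∈ p.support ∧ x ≠ w := by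
  classical
  by_cases hw : w ∈ (p.takeUntil z hz).support
  · have hsplit : ((p.takeUntil z hz).append (p.dropUntil z hz)).IsPath := by
      rwa [p.take_spec hz]
    refine ⟨v, Or.inr rfl, p.dropUntil z hz, fun x hx => ⟨?_, ?_⟩⟩
    · exact p.support_dropUntil_subset_support hz hx
    · exact fun h => hsplit.ne_of_mem_support_of_append hwz hw (h ▸ hx) rfl
  · refine ⟨u, Or.inl rfl, (p.takeUntil z hz).reverse, fun x hx => ?_⟩
    rw [Walk.support_reverse, List.mem_reverse] at hx
    exact ⟨p.support_takeUntil_subset_support hz hx, fun h => hw (h ▸ hx)⟩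

lemma induce_union_connected_of_forall_walk {S T : Set V} (hS : (G.induce S).Connected)
    (h : ∀ z ∈ T, ∃ e ∈ S, ∃ q : G.Walk z e, ∀ x ∈ q.support, x ∈ S ∪ T) :
    (G.induce (S ∪ T)).Connected := by
  obtain ⟨⟨c, hc⟩⟩ := hS.nonempty
  refine induce_connected_of_patches c (Or.inl hc) fun {z} hz => ?_
  rcases hz with hzS | hzT
  · exact ⟨S, Set.subset_union_left, hc, hzS, hS.preconnected _ _⟩
  · obtain ⟨e, heS, q, hq⟩ := h z hzT
    have hconn := induce_union_connected hS.preconnected q.connected_induce_support.preconnected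
      ⟨e, heS, q.end_mem_support⟩
    exact ⟨S ∪ {x | x ∈ q.support}, Set.union_subset Set.subset_union_left hq, Or.inl hc,
      Or.inr q.start_mem_support, hconn.preconnected _ _⟩

def induceInduceComplSingletonIso (C : Set V) (w : C) :
    (G.induce C).induce {w}ᶜ ≃g G.induce (C \ {(w : V)}) where
  toFun x := ⟨x.1.1, x.1.2, fun h => x.2 (Subtype.ext h)⟩
  invFun x := ⟨⟨x.1, x.2.1⟩, fun h => x.2.2 (congrArg Subtype.val h)⟩
  left_inv _ := rfl
  right_inv _ := rfl
  map_rel_iff' := Iff.rfl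

lemma noCutVtx_induce_iff {C : Set V} :
    NoCutVtx (G.induce C) ↔
      (G.induce C).Connected ∧ ∀ w ∈ C, (G.induce (C \ {w})).Connected :=
  and_congr_right fun _ =>
    ⟨fun h w hw => (induceInduceComplSingletonIso C ⟨w, hw⟩).connected_iff.mp (h ⟨w, hw⟩),
      fun h w => (induceInduceComplSingletonIso C w).connected_iff.mpr (h w w.2)⟩

lemma noCutVtx_induce_union_support {S : Set V} (hS : NoCutVtx (G.induce S)) {a b : V}
    (ha : a ∈ S) (hb : b ∈ S) {p : G.Walk a b} (hp : p.IsPath) :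
    NoCutVtx (G.induce (S ∪ {z | z ∈ p.support})) := by
  rw [noCutVtx_induce_iff] at hS ⊢
  obtain ⟨hSconn, hSdel⟩ := hS
  refine ⟨induce_union_connected hSconn.preconnected p.connected_induce_support.preconnected
    ⟨a, ha, p.start_mem_support⟩, fun w _ => ?_⟩
  have hSw : (G.induce (S \ {w})).Connected := by
    by_cases hwS : w ∈ S
    · exact hSdel w hwS
    · rwa [Set.sdiff_singleton_eq_self hwS]
  rw [Set.union_sdiff_distrib]
  refine induce_union_connected_of_forall_walk hSw fun z ⟨hzp, hzw⟩ => ?_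
  obtain ⟨e, he, q, hq⟩ := hp.exists_walk_to_endpoint_avoiding hzp (Ne.symm hzw)
  have heS : e ∈ S := by rcases he with rfl | rfl <;> assumption
  exact ⟨e, ⟨heS, (hq e q.end_mem_support).2⟩, q, fun x hx => Or.inr (hq x hx)⟩

lemma IsBlockSet.mem_of_adj {B : Set V} (hB : IsBlockSet G B) {x y b : V} (hx : x ∈ B)
    (hxc : ¬ CutVtx G x) (hb : b ∈ B) (hbx : b ≠ x) (hxy : G.Adj x y) : y ∈ B := by
  classical
  by_contra hy
  obtain ⟨q⟩ := (not_not.mp hxc : (G.induce {x}ᶜ).Connected).preconnected ⟨y, hxy.ne'⟩ ⟨b, hbx⟩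
  set r : G.Walk y b := (q.map (Embedding.induce _).toHom).bypass
  have hxr : x ∉ r.support := fun hx' => by
    obtain ⟨s, -, hs⟩ := List.mem_map.mp
      (Walk.support_map _ q ▸ (q.map _).support_bypass_subset_support hx')
    exact s.2 hs
  have hp : (Walk.cons hxy r).IsPath := (Walk.cons_isPath_iff _ _).mpr ⟨Walk.bypass_isPath _, hxr⟩
  have hBeq := hB.2 _ Set.subset_union_left (noCutVtx_induce_union_support hB.1 hx hb hp)
  exact hy (hBeq ▸ Or.inr (by simp))

lemma Walk.mem_support_of_forall_adj_mem {B : Set V} {v : V}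
    (hB : ∀ a ∈ B, a ≠ v → ∀ y, G.Adj a y → y ∈ B) {a c : V} (ha : a ∈ B) (hc : c ∉ B) :
    ∀ p : G.Walk a c, v ∈ p.support := by
  intro p
  induction p with
  | nil => exact absurd ha hc
  | @cons a d c had q ih =>
    rw [Walk.support_cons, List.mem_cons]
    by_cases hav : a = v
    · exact Or.inl hav.symm
    · exact Or.inr (ih (hB a ha hav d had) hc)

lemma Connected.dist_eq_add_of_forall_mem_support (hG : G.Connected) {u v w : V}
    (h : ∀ p : G.Walk u w, v ∈ p.support) : G.dist u w = G.dist u v + G.dist v w := by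
  classical
  refine le_antisymm hG.dist_triangle ?_
  obtain ⟨p, hp⟩ := hG.exists_walk_length_eq_dist u w
  calc G.dist u v + G.dist v w
      ≤ (p.takeUntil v (h p)).length + (p.dropUntil v (h p)).length :=
        add_le_add (dist_le _) (dist_le _)
    _ = G.dist u w := by rw [← Walk.length_append, p.take_spec, hp]

end SimpleGraph

namespace CompBipOn

variable {G : SimpleGraph V} {B V1 V2 : Set V} {x y : V}

lemma symm (h : CompBipOn G B V1 V2) : CompBipOn G B V2 V1 := by
  obtain ⟨h1, h2, hdisj, hunion, hadj⟩ := h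
  exact ⟨h2, h1, hdisj.symm, Set.union_comm V1 V2 ▸ hunion,
    fun x hx y hy => (hadj x hx y hy).trans or_comm⟩

lemma mem_of_mem_left (h : CompBipOn G B V1 V2) (hx : x ∈ V1) : x ∈ B :=
  h.2.2.2.1 ▸ Or.inl hx

lemma adj (h : CompBipOn G B V1 V2) (hx : x ∈ V1) (hy : y ∈ V2) : G.Adj x y :=
  (h.2.2.2.2 x (h.mem_of_mem_left hx) y (h.symm.mem_of_mem_left hy)).mpr (Or.inl ⟨hx, hy⟩)

lemma not_adj (h : CompBipOn G B V1 V2) (hx : x ∈ V1) (hy : y ∈ V1) : ¬ G.Adj x y := by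
  rw [h.2.2.2.2 x (h.mem_of_mem_left hx) y (h.mem_of_mem_left hy)]
  rintro (⟨-, hy2⟩ | ⟨hx2, -⟩)
  exacts [Set.disjoint_left.mp h.2.2.1 hy hy2, Set.disjoint_left.mp h.2.2.1 hx hx2]

lemma dist_eq_two (h : CompBipOn G B V1 V2) (hx : x ∈ V1) (hy : y ∈ V1) (hxy : x ≠ y) :
    G.dist x y = 2 := by
  obtain ⟨t, ht⟩ := h.2.1
  let p : G.Walk x y := .cons (h.adj hx ht) (.cons (h.symm.adj ht hy) .nil)
  have hle : G.dist x y ≤ 2 := dist_le p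
  have hpos : 0 < G.dist x y := Reachable.pos_dist_of_ne ⟨p⟩ hxy
  have hne : G.dist x y ≠ 1 := fun h1 => h.not_adj hx hy (dist_eq_one_iff_adj.mp h1)
  omega

lemma dist_le_two (h : CompBipOn G B V1 V2) (hx : x ∈ B) (hy : y ∈ B) : G.dist x y ≤ 2 := by
  have hunion := h.2.2.2.1
  rw [← hunion] at hx hy
  by_cases hxy : x = y
  · simp [hxy]
  rcases hx with hx | hx <;> rcases hy with hy | hy
  · exact (h.dist_eq_two hx hy hxy).le
  · exact (dist_eq_one_iff_adj.mpr (h.adj hx hy)).le.trans one_le_two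
  · exact (dist_eq_one_iff_adj.mpr (h.symm.adj hx hy)).le.trans one_le_two
  · exact (h.symm.dist_eq_two hx hy hxy).le

end CompBipOn

lemma ecc_le_of_forall_dist_le {G : SimpleGraph V} {v : V} {k : ℕ} (h : ∀ w, G.dist v w ≤ k) :
    ecc G v ≤ k :=
  have : Nonempty V := ⟨v⟩
  csSup_le (Set.range_nonempty _) (by rintro _ ⟨w, rfl⟩; exact h w)

section Eccentricity

variable [Finite V] {G : SimpleGraph V}

lemma dist_le_ecc (v w : V) : G.dist v w ≤ ecc G v :=
  le_csSup (Set.finite_range _).bddAbove (Set.mem_range_self w)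

lemma exists_dist_eq_ecc (v : V) : ∃ w, G.dist v w = ecc G v :=
  have : Nonempty V := ⟨v⟩
  Nat.sSup_mem (Set.range_nonempty _) (Set.finite_range _).bddAbove

lemma exists_dist_eq_gdiam [Nonempty V] : ∃ a b, G.dist a b = gdiam G := by
  obtain ⟨a, ha⟩ : gdiam G ∈ Set.range (ecc G) :=
    Nat.sSup_mem (Set.range_nonempty _) (Set.finite_range _).bddAbove
  obtain ⟨b, hb⟩ := exists_dist_eq_ecc (G := G) a
  exact ⟨a, b, hb.trans ha⟩

lemma ecc_eq_dist_add_ecc (hG : G.Connected) {u v w : V} (hw : G.dist v w = ecc G v)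
    (huw : G.dist u w = G.dist u v + G.dist v w) : ecc G u = G.dist u v + ecc G v := by
  refine le_antisymm (ecc_le_of_forall_dist_le fun w' => ?_) ?_
  · exact (hG.dist_triangle (v := v)).trans (Nat.add_le_add_left (dist_le_ecc v w') _)
  · exact hw ▸ huw ▸ dist_le_ecc u w

lemma exists_notMem_dist_eq_ecc (hG : G.Connected) {B : Set V}
    (hB : ∀ p ∈ B, ∀ q ∈ B, G.dist p q ≤ 2) (h4 : 4 ≤ gdiam G) {v : V} (hv : v ∈ B) :
    ∃ w ∉ B, G.dist v w = ecc G v := by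
  obtain ⟨w₀, hw₀⟩ := exists_dist_eq_ecc (G := G) v
  by_cases hw₀B : w₀ ∉ B
  · exact ⟨w₀, hw₀B, hw₀⟩
  have : Nonempty V := ⟨v⟩
  have hecc : ecc G v ≤ 2 := hw₀ ▸ hB v hv w₀ (not_not.mp hw₀B)
  obtain ⟨a, b, hab⟩ := exists_dist_eq_gdiam (G := G)
  have htri := hG.dist_triangle (u := a) (v := v) (w := b)
  rw [dist_comm (u := a) (v := v)] at htri
  have hva := dist_le_ecc (G := G) v a
  have hvb := dist_le_ecc (G := G) v b
  by_cases haB : a ∈ B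
  · by_cases hbB : b ∈ B
    · have := hB a haB b hbB
      omega
    · exact ⟨b, hbB, by omega⟩
  · exact ⟨a, haB, by omega⟩

end Eccentricity

theorem stmt_7 {V : Type*} [Fintype V] (G : SimpleGraph V) (hG : ClassB G)
    (h4 : 4 ≤ gdiam G) (B0 V1 V2 : Set V) (hB : IsBlockSet G B0)
    (hbip : CompBipOn G B0 V1 V2)
    (v : V) (hv : B0 ∩ cutSet G = {v})
    (u : V) (hu : u ∈ B0) (hnc : ¬ CutVtx G u) :
    ((u ∈ V1 ∧ v ∈ V1) ∨ (u ∈ V2 ∧ v ∈ V2) → ecc G u = ecc G v + 2) ∧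
    ((u ∈ V1 ∧ v ∈ V2) ∨ (u ∈ V2 ∧ v ∈ V1) → ecc G u = ecc G v + 1) := by
  have hconn := hG.1.1
  obtain ⟨hvB, hvc⟩ : v ∈ B0 ∩ cutSet G := hv ▸ Set.mem_singleton v
  have huv : u ≠ v := fun h => hnc (h ▸ hvc)
  have hclosed : ∀ a ∈ B0, a ≠ v → ∀ y, G.Adj a y → y ∈ B0 := fun a ha hav _ hay =>
    hB.mem_of_adj ha (fun hac => hav (hv ▸ ⟨ha, hac⟩ : a ∈ ({v} : Set V))) hvB hav.symm hay
  obtain ⟨w, hwB, hw⟩ :=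
    exists_notMem_dist_eq_ecc hconn (fun _ hp _ hq => hbip.dist_le_two hp hq) h4 hvB
  have hecc : ecc G u = G.dist u v + ecc G v := ecc_eq_dist_add_ecc hconn hw
    (hconn.dist_eq_add_of_forall_mem_support (Walk.mem_support_of_forall_adj_mem hclosed hu hwB))
  constructor
  · rintro (⟨hu1, hv1⟩ | ⟨hu2, hv2⟩)
    · rw [hecc, hbip.dist_eq_two hu1 hv1 huv, add_comm]
    · rw [hecc, hbip.symm.dist_eq_two hu2 hv2 huv, add_comm]
  · rintro (⟨hu1, hv2⟩ | ⟨hu2, hv1⟩)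
    · rw [hecc, dist_eq_one_iff_adj.mpr (hbip.adj hu1 hv2), add_comm]
    · rw [hecc, dist_eq_one_iff_adj.mpr (hbip.symm.adj hu2 hv1), add_comm]
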